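/- For ψ > 0, the integral ∫_0^∞ e^{−√u}/(u + ψ) du equals [π − 2 Si(√ψ)] sin(√ψ) − 2 Ci(√ψ) cos(√ψ), where Si(x) = ∫_0^x sin(t)/t dt and Ci(x) = −∫_x^∞ cos(t)/t dt. -/

import Mathlib

open MeasureTheory Real Filter

/-!
Put a = √ψ. The substitution u = t² turns the integral into 2 ∫₀^∞ t e^{-t} / (t² + a²) dt.
Writing 1 / (1 + u) = ∫₀^∞ e^{-(1+u)t} dt and exchanging the order of integration identifies
this Laplace-type integral with the improper integral ∫₀^∞ cos (a u) / (1 + u) du, because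
∫₀^∞ e^{-tu} cos (a u) du = t / (t² + a²). Substituting v = a (1 + u) and expanding cos (v - a)
rewrites the latter as cos a ∫_a^∞ cos v / v dv + sin a ∫_a^∞ sin v / v dv = cos a · L +
sin a (π/2 - Si a). The Dirichlet integral π/2 comes from the same exchange with
1 / v = ∫₀^∞ e^{-vt} dt.
-/

open Set Topology

theorem integral_Ioi_comp_sqrt {E : Type*} [NormedAddCommGroup E] [NormedSpace ℝ E] (g : ℝ → E) :
    ∫ u in Ioi 0, g (√u) = ∫ t in Ioi 0, (2 * t) • g t := by
  rw [← integral_comp_rpow_Ioi_of_pos two_pos]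
  refine setIntegral_congr_fun measurableSet_Ioi fun t ht => ?_
  norm_num [sqrt_sq (le_of_lt ht)]

theorem integral_Ioi_exp_neg_mul {b : ℝ} (hb : 0 < b) : ∫ t in Ioi 0, exp (-b * t) = b⁻¹ := by
  simpa using integral_exp_mul_Ioi (neg_lt_zero.2 hb) 0

theorem integrableOn_exp_neg_mul_mul_of_abs_le {b C : ℝ} (hb : 0 < b) {g : ℝ → ℝ}
    (hg : Measurable g) (hC : ∀ t ∈ Ioi (0 : ℝ), |g t| ≤ C) :
    IntegrableOn (fun t => exp (-b * t) * g t) (Ioi 0) :=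
  (exp_neg_integrableOn_Ioi 0 hb).mul_bdd hg.aestronglyMeasurable <|
    (ae_restrict_mem measurableSet_Ioi).mono fun t ht => hC t ht

theorem abs_setIntegral_exp_neg_mul_mul_le {b C : ℝ} (hb : 0 < b) {g : ℝ → ℝ}
    (hC : ∀ t ∈ Ioi (0 : ℝ), |g t| ≤ C) :
    |∫ t in Ioi 0, exp (-b * t) * g t| ≤ C / b := by
  have hbound := norm_integral_le_of_norm_le (f := fun t => exp (-b * t) * g t)
    ((exp_neg_integrableOn_Ioi 0 hb).const_mul C) <|
    (ae_restrict_mem measurableSet_Ioi).mono fun t ht => by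
      rw [norm_mul, norm_of_nonneg (exp_pos _).le, mul_comm]
      exact mul_le_mul_of_nonneg_right (hC t ht) (exp_pos _).le
  rwa [integral_const_mul, integral_Ioi_exp_neg_mul hb, ← div_eq_mul_inv] at hbound

theorem tendsto_setIntegral_exp_neg_mul_mul_zero {ι : Type*} {l : Filter ι} {b : ι → ℝ}
    (hb : Tendsto b l atTop) {g : ι → ℝ → ℝ} {C : ℝ} (hC : ∀ i, ∀ t ∈ Ioi (0 : ℝ), |g i t| ≤ C) :
    Tendsto (fun i => ∫ t in Ioi 0, exp (-b i * t) * g i t) l (𝓝 0) :=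
  squeeze_zero_norm' ((hb.eventually_gt_atTop 0).mono fun i hi =>
    abs_setIntegral_exp_neg_mul_mul_le hi (hC i)) (tendsto_const_nhds.div_atTop hb)

theorem abs_mul_add_mul_div_sq_add_sq_le {p q a : ℝ} (ha : 0 < a) (hp : |p| ≤ 1) (hq : |q| ≤ 1)
    (t : ℝ) : |(p * t + q * a) / (t ^ 2 + a ^ 2)| ≤ 2 / a := by
  have hpos : 0 < t ^ 2 + a ^ 2 := by positivity
  rw [abs_div, abs_of_pos hpos, div_le_div_iff₀ hpos ha]
  have hnum : |p * t + q * a| ≤ |t| + a := by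
    calc |p * t + q * a| ≤ |p| * |t| + |q| * a := by
          simpa [abs_mul, abs_of_pos ha] using abs_add_le (p * t) (q * a)
      _ ≤ |t| + a := by gcongr <;> nlinarith [abs_nonneg t, abs_nonneg p, abs_nonneg q]
  nlinarith [sq_nonneg (|t| - a), sq_abs t, abs_nonneg t, abs_nonneg (p * t + q * a)]

theorem integral_exp_neg_mul_mul_cos {t a : ℝ} (h : t ^ 2 + a ^ 2 ≠ 0) (R : ℝ) :
    ∫ u in 0..R, exp (-t * u) * cos (a * u)
      = (t - exp (-t * R) * (cos (a * R) * t - sin (a * R) * a)) / (t ^ 2 + a ^ 2) := by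
  have hderiv : ∀ u, HasDerivAt
      (fun u => exp (-t * u) * (sin (a * u) * a - cos (a * u) * t) / (t ^ 2 + a ^ 2))
      (exp (-t * u) * cos (a * u)) u := by
    intro u
    have hlin (c : ℝ) : HasDerivAt (fun u => c * u) c u := by
      simpa using (hasDerivAt_id u).const_mul c
    refine (((hlin (-t)).exp.mul (((hlin a).sin.mul_const a).sub
      ((hlin a).cos.mul_const t))).div_const (t ^ 2 + a ^ 2)).congr_deriv ?_
    simp only [Pi.sub_apply]
    field_simp
    ring
  rw [intervalIntegral.integral_eq_sub_of_hasDerivAt (fun u _ => hderiv u)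
    ((by fun_prop : Continuous fun u => exp (-t * u) * cos (a * u)).intervalIntegrable _ _)]
  simp only [mul_zero, exp_zero, sin_zero, cos_zero]
  field_simp
  ring

theorem integral_exp_neg_mul_mul_sin {t a : ℝ} (h : t ^ 2 + a ^ 2 ≠ 0) (R : ℝ) :
    ∫ u in 0..R, exp (-t * u) * sin (a * u)
      = (a - exp (-t * R) * (sin (a * R) * t + cos (a * R) * a)) / (t ^ 2 + a ^ 2) := by
  have hderiv : ∀ u, HasDerivAt
      (fun u => -exp (-t * u) * (sin (a * u) * t + cos (a * u) * a) / (t ^ 2 + a ^ 2))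
      (exp (-t * u) * sin (a * u)) u := by
    intro u
    have hlin (c : ℝ) : HasDerivAt (fun u => c * u) c u := by
      simpa using (hasDerivAt_id u).const_mul c
    refine (((hlin (-t)).exp.neg.mul (((hlin a).sin.mul_const t).add
      ((hlin a).cos.mul_const a))).div_const (t ^ 2 + a ^ 2)).congr_deriv ?_
    simp only [Pi.add_apply, Pi.neg_apply]
    field_simp
    ring
  rw [intervalIntegral.integral_eq_sub_of_hasDerivAt (fun u _ => hderiv u)
    ((by fun_prop : Continuous fun u => exp (-t * u) * sin (a * u)).intervalIntegrable _ _)]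
  simp only [mul_zero, exp_zero, sin_zero, cos_zero]
  field_simp
  ring

theorem intervalIntegral_div_add_eq_integral_Ioi_laplace {f : ℝ → ℝ} (hf : Continuous f)
    {c K R : ℝ} (hc : 0 ≤ c) (hR : 0 ≤ R) (hK : ∀ u ∈ Ioc 0 R, |f u| ≤ K * (c + u)) :
    ∫ u in 0..R, f u / (c + u) = ∫ t in Ioi 0, exp (-c * t) * ∫ u in 0..R, exp (-t * u) * f u := by
  set F : ℝ → ℝ → ℝ := fun u t => f u * exp (-(c + u) * t)
  have hF : Continuous (Function.uncurry F) := by fun_prop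
  have hlaplace : ∀ u ∈ Ioc (0 : ℝ) R, ∀ y : ℝ,
      ∫ t in Ioi 0, y * exp (-(c + u) * t) = y / (c + u) := fun u hu y => by
      rw [integral_const_mul, integral_Ioi_exp_neg_mul (by linarith [hu.1]), div_eq_mul_inv]
  have hint : Integrable (Function.uncurry F)
      ((volume.restrict (Ioc 0 R)).prod (volume.restrict (Ioi 0))) := by
    rw [integrable_prod_iff hF.aestronglyMeasurable]
    refine ⟨(ae_restrict_mem measurableSet_Ioc).mono fun u hu =>
      (exp_neg_integrableOn_Ioi 0 (by linarith [hu.1] : 0 < c + u)).const_mul (f u), ?_⟩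
    refine (integrable_const K).mono' hF.norm.aestronglyMeasurable.integral_prod_right' <|
      (ae_restrict_mem measurableSet_Ioc).mono fun u hu => ?_
    have hcu : 0 < c + u := by linarith [hu.1]
    simp only [Function.uncurry_apply_pair, F, norm_mul, norm_of_nonneg (exp_pos _).le,
      Real.norm_eq_abs, hlaplace u hu, abs_div, abs_abs, abs_of_pos hcu]
    exact (div_le_iff₀ hcu).2 (hK u hu)
  calc ∫ u in 0..R, f u / (c + u) = ∫ u in Ioc 0 R, ∫ t in Ioi 0, F u t := by
        rw [intervalIntegral.integral_of_le hR]
        exact setIntegral_congr_fun measurableSet_Ioc fun u hu => (hlaplace u hu (f u)).symm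
    _ = ∫ t in Ioi 0, ∫ u in Ioc 0 R, F u t := integral_integral_swap hint
    _ = ∫ t in Ioi 0, exp (-c * t) * ∫ u in 0..R, exp (-t * u) * f u := by
        congr 1 with t
        rw [intervalIntegral.integral_of_le hR, ← integral_const_mul]
        congr 1 with u
        simp only [F, ← mul_assoc, ← exp_add]
        ring_nf

theorem tendsto_intervalIntegral_cos_mul_div_one_add {a : ℝ} (ha : 0 < a) :
    Tendsto (fun R => ∫ u in 0..R, cos (a * u) / (1 + u)) atTop
      (𝓝 (∫ t in Ioi 0, t * exp (-t) / (t ^ 2 + a ^ 2))) := by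
  set tail : ℝ → ℝ := fun R => ∫ t in Ioi 0,
    exp (-(1 + R) * t) * ((cos (a * R) * t + -sin (a * R) * a) / (t ^ 2 + a ^ 2))
  have htail : Tendsto tail atTop (𝓝 0) :=
    tendsto_setIntegral_exp_neg_mul_mul_zero (tendsto_atTop_add_const_left _ 1 tendsto_id)
      fun R t _ => abs_mul_add_mul_div_sq_add_sq_le ha (abs_cos_le_one _)
        ((abs_neg _).trans_le (abs_sin_le_one _)) t
  have hmain : IntegrableOn (fun t => exp (-1 * t) * ((1 * t + 0 * a) / (t ^ 2 + a ^ 2))) (Ioi 0) :=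
    integrableOn_exp_neg_mul_mul_of_abs_le one_pos (by fun_prop)
      fun t _ => abs_mul_add_mul_div_sq_add_sq_le ha (by simp) (by simp) t
  have hsplit : ∀ R ≥ 0, ∫ u in 0..R, cos (a * u) / (1 + u)
      = (∫ t in Ioi 0, t * exp (-t) / (t ^ 2 + a ^ 2)) - tail R := by
    intro R hR
    have hlaplace := intervalIntegral_div_add_eq_integral_Ioi_laplace (f := fun u => cos (a * u))
      (by fun_prop) zero_le_one hR (K := 1) fun u hu => by
        linarith [abs_cos_le_one (a * u), hu.1]
    rw [hlaplace, ← integral_sub (hmain.congr_fun (fun t _ => by ring_nf) measurableSet_Ioi)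
      (integrableOn_exp_neg_mul_mul_of_abs_le (by linarith) (by fun_prop)
        fun t _ => abs_mul_add_mul_div_sq_add_sq_le ha (abs_cos_le_one _)
          ((abs_neg _).trans_le (abs_sin_le_one _)) t)]
    refine setIntegral_congr_fun measurableSet_Ioi fun t _ => ?_
    rw [integral_exp_neg_mul_mul_cos (by positivity), show -(1 + R) * t = -1 * t + -t * R by ring,
      exp_add]
    ring_nf
  simpa using (tendsto_const_nhds.sub htail).congr' <|
    (eventually_ge_atTop 0).mono fun R hR => (hsplit R hR).symm

theorem tendsto_intervalIntegral_sin_div_atTop :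
    Tendsto (fun R => ∫ u in 0..R, sin u / u) atTop (𝓝 (π / 2)) := by
  set tail : ℝ → ℝ := fun R => ∫ t in Ioi 0,
    exp (-R * t) * ((sin R * t + cos R * 1) / (t ^ 2 + 1 ^ 2))
  have hbound : ∀ R, ∀ t ∈ Ioi (0 : ℝ), |(sin R * t + cos R * 1) / (t ^ 2 + 1 ^ 2)| ≤ 2 / 1 :=
    fun R t _ => abs_mul_add_mul_div_sq_add_sq_le one_pos (abs_sin_le_one _) (abs_cos_le_one _) t
  have htail : Tendsto tail atTop (𝓝 0) :=
    tendsto_setIntegral_exp_neg_mul_mul_zero tendsto_id hbound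
  have hsplit : ∀ R > 0, ∫ u in 0..R, sin u / u = π / 2 - tail R := by
    intro R hR
    have hlaplace := intervalIntegral_div_add_eq_integral_Ioi_laplace continuous_sin le_rfl hR.le
      (K := 1) fun u hu => by
        simpa [abs_of_pos hu.1] using abs_sin_le_abs (x := u)
    simp only [zero_add, neg_zero, zero_mul, exp_zero, one_mul] at hlaplace
    have hpi : ∫ t in Ioi 0, (1 + t ^ 2)⁻¹ = π / 2 := by
      simp [integral_Ioi_inv_one_add_sq]
    rw [hlaplace, ← hpi, ← integral_sub integrable_inv_one_add_sq.integrableOn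
        (integrableOn_exp_neg_mul_mul_of_abs_le hR (by fun_prop) (hbound R))]
    refine setIntegral_congr_fun measurableSet_Ioi fun t _ => ?_
    have hsin := integral_exp_neg_mul_mul_sin (t := t) (a := 1) (by positivity) R
    simp only [one_mul] at hsin
    rw [hsin]
    field_simp
    ring
  simpa using (tendsto_const_nhds.sub htail).congr' <|
    (eventually_gt_atTop 0).mono fun R hR => (hsplit R hR).symm

theorem intervalIntegrable_sin_div (a b : ℝ) :
    IntervalIntegrable (fun x => sin x / x) volume a b :=
  (continuous_sinc.intervalIntegrable a b).congr_ae <| ae_restrict_of_ae <|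
    (measure_eq_zero_iff_ae_notMem.1 (measure_singleton (0 : ℝ))).mono
      fun _ hx => sinc_of_ne_zero hx

theorem tendsto_intervalIntegral_sin_div_atTop' (a : ℝ) :
    Tendsto (fun T => ∫ v in a..T, sin v / v) atTop (𝓝 (π / 2 - ∫ v in 0..a, sin v / v)) :=
  (tendsto_intervalIntegral_sin_div_atTop.sub_const _).congr fun T =>
    intervalIntegral.integral_interval_sub_left (intervalIntegrable_sin_div 0 T)
      (intervalIntegrable_sin_div 0 a)

theorem intervalIntegral_comp_mul_one_add_div (h : ℝ → ℝ) {a : ℝ} (ha : a ≠ 0) (R : ℝ) :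
    ∫ u in 0..R, h (a * (1 + u)) / (1 + u) = ∫ v in a..a * (1 + R), h v / v := by
  have hsub := intervalIntegral.integral_comp_mul_add (f := fun v => h v / v) (a := 0) (b := R) ha a
  simp only [mul_zero, zero_add, smul_eq_mul] at hsub
  rw [show a * (1 + R) = a * R + a by ring,
    ← mul_inv_cancel_left₀ ha (∫ v in a..a * R + a, h v / v), ← hsub, ← intervalIntegral.integral_const_mul]
  refine intervalIntegral.integral_congr fun u _ => ?_
  rw [show a * u + a = a * (1 + u) by ring]
  field_simp

theorem intervalIntegral_cos_sub_div {a T : ℝ} (ha : 0 < a) (haT : a ≤ T) :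
    ∫ v in a..T, cos (v - a) / v
      = cos a * (∫ v in a..T, cos v / v) + sin a * ∫ v in a..T, sin v / v := by
  have hcont {f : ℝ → ℝ} (hf : Continuous f) : IntervalIntegrable (fun v => f v / v) volume a T :=
    (hf.continuousOn.div continuousOn_id fun v hv =>
      (ha.trans_le (uIcc_of_le haT ▸ hv).1).ne').intervalIntegrable
  rw [← intervalIntegral.integral_const_mul, ← intervalIntegral.integral_const_mul,
    ← intervalIntegral.integral_add ((hcont continuous_cos).const_mul _)
      ((hcont continuous_sin).const_mul _)]
  refine intervalIntegral.integral_congr fun v _ => ?_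
  simp only [cos_sub]
  ring

/-- ∫_0^∞ e^{-√u}/(u+ψ) du = [π - 2 Si(√ψ)] sin(√ψ) - 2 Ci(√ψ) cos(√ψ), where
Si(x) = ∫_0^x sin t / t dt and Ci(x) = -∫_x^∞ cos t / t dt (as an improper limit L). -/
theorem integral_exp_sqrt_div (ψ : ℝ) (hψ : 0 < ψ) (L : ℝ)
    (hL : Tendsto (fun T => ∫ t in Real.sqrt ψ..T, Real.cos t / t) atTop (nhds L)) :
    ∫ u in Set.Ioi (0 : ℝ), Real.exp (-Real.sqrt u) / (u + ψ)
      = (Real.pi - 2 * ∫ t in (0 : ℝ)..Real.sqrt ψ, Real.sin t / t) * Real.sin (Real.sqrt ψ)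
        - 2 * (-L) * Real.cos (Real.sqrt ψ) := by
  set a := √ψ
  have ha : 0 < a := sqrt_pos.2 hψ
  have hsubst : ∫ u in Ioi 0, exp (-√u) / (u + ψ)
      = 2 * ∫ t in Ioi 0, t * exp (-t) / (t ^ 2 + a ^ 2) := by
    calc ∫ u in Ioi 0, exp (-√u) / (u + ψ) = ∫ u in Ioi 0, exp (-√u) / (√u ^ 2 + ψ) :=
          setIntegral_congr_fun measurableSet_Ioi fun u hu => by rw [sq_sqrt (le_of_lt hu)]
      _ = ∫ t in Ioi 0, (2 * t) • (exp (-t) / (t ^ 2 + ψ)) :=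
          integral_Ioi_comp_sqrt fun t => exp (-t) / (t ^ 2 + ψ)
      _ = 2 * ∫ t in Ioi 0, t * exp (-t) / (t ^ 2 + a ^ 2) := by
          rw [← integral_const_mul, sq_sqrt hψ.le]
          congr 1 with t
          rw [smul_eq_mul]
          ring
  have hcos : Tendsto (fun R => ∫ u in 0..R, cos (a * u) / (1 + u)) atTop
      (𝓝 (cos a * L + sin a * (π / 2 - ∫ t in 0..a, sin t / t))) := by
    have hT : Tendsto (fun R => a * (1 + R)) atTop atTop :=
      (tendsto_atTop_add_const_left _ 1 tendsto_id).const_mul_atTop ha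
    refine (((hL.const_mul (cos a)).add
      ((tendsto_intervalIntegral_sin_div_atTop' a).const_mul (sin a))).comp hT).congr' ?_
    filter_upwards [eventually_ge_atTop 0] with R hR
    rw [Function.comp_apply, ← intervalIntegral_cos_sub_div ha (by nlinarith),
      ← intervalIntegral_comp_mul_one_add_div (fun v => cos (v - a)) ha.ne']
    refine intervalIntegral.integral_congr fun u _ => ?_
    ring_nf
  rw [hsubst, tendsto_nhds_unique (tendsto_intervalIntegral_cos_mul_div_one_add ha) hcos]
  ring
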